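/- arXiv:1006.2499 — 2 statements merged into one kernel-verified Lean document; each statement's English description precedes it below -/
import Mathlib

section
/- Let (A, μ, α) be a Hom-alternative algebra over a field K of characteristic zero and let f : A → A be a linear map with f∘α = α∘f. Define δ¹f(x,y) = μ(f(x), y) + μ(x, f(y)) − f(μ(x,y)) and, for a bilinear map φ : A × A → A, define δ²φ(x,y,z) = μ(φ(x,y), α(z)) − μ(α(x), φ(y,z)) + φ(μ(x,y), α(z)) − φ(α(x), μ(y,z)) + μ(φ(y,x), α(z)) − μ(α(y), φ(x,z)) + φ(μ(y,x), α(z)) − φ(α(y), μ(x,z)). Then δ²(δ¹f) = 0, i.e., δ²(δ¹f)(x,y,z) = 0 for all x, y, z ∈ A. -/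
/-!
Write `as(a, b, c) = μ(μ a b, α c) - μ(α a, μ b c)` for the Hom-associator. Expanding
`δ²(δ¹f)` and using `f ∘ α = α ∘ f`, everything cancels except
`f(S(x,y,z)) - S(f x, y, z) - S(f y, x, z) - S(x, y, f z)`, where
`S(a, b, c) = as(a, b, c) + as(b, a, c)`. Polarizing the left Hom-alternative identity
`as(a, a, c) = 0` shows that `S` vanishes identically.
-/

section HomAssociator

variable {R M : Type*} [CommRing R] [AddCommGroup M] [Module R M]

def homAssociator (μ : M →ₗ[R] M →ₗ[R] M) (α : M →ₗ[R] M) (a b c : M) : M :=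
  μ (μ a b) (α c) - μ (α a) (μ b c)

theorem homAssociator_add_homAssociator_swap_eq_zero (μ : M →ₗ[R] M →ₗ[R] M) (α : M →ₗ[R] M)
    (hleft : ∀ x y : M, μ (α x) (μ x y) = μ (μ x x) (α y)) (a b c : M) :
    homAssociator μ α a b c + homAssociator μ α b a c = 0 := by
  have hab := hleft (a + b) c
  simp only [map_add, LinearMap.add_apply] at hab
  unfold homAssociator
  linear_combination (norm := module) hleft a c + hleft b c - hab

theorem delta_two_delta_one_eq_homAssociator_sum (μ : M →ₗ[R] M →ₗ[R] M) (α f : M →ₗ[R] M)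
    (hf : ∀ x : M, f (α x) = α (f x)) (D : M → M → M)
    (hD : ∀ x y : M, D x y = μ (f x) y + μ x (f y) - f (μ x y)) (x y z : M) :
    let S := fun a b c => homAssociator μ α a b c + homAssociator μ α b a c
    μ (D x y) (α z) - μ (α x) (D y z) + D (μ x y) (α z) - D (α x) (μ y z)
        + μ (D y x) (α z) - μ (α y) (D x z) + D (μ y x) (α z) - D (α y) (μ x z)
      = S (f x) y z + S (f y) x z + S x y (f z) - f (S x y z) := by
  simp only [homAssociator, hD, map_add, map_sub, LinearMap.add_apply, LinearMap.sub_apply, hf]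
  module

end HomAssociator

theorem delta_two_comp_delta_one_eq_zero_general
    {K : Type*} [Field K] {A : Type*} [AddCommGroup A] [Module K A]
    (μ : A →ₗ[K] A →ₗ[K] A) (α : A →ₗ[K] A)
    (hleft : ∀ x y : A, μ (α x) (μ x y) = μ (μ x x) (α y))
    (f : A →ₗ[K] A) (hf : ∀ x : A, f (α x) = α (f x))
    (D : A → A → A)
    (hD : ∀ x y : A, D x y = μ (f x) y + μ x (f y) - f (μ x y)) :
    ∀ x y z : A,
      μ (D x y) (α z) - μ (α x) (D y z) + D (μ x y) (α z) - D (α x) (μ y z)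
        + μ (D y x) (α z) - μ (α y) (D x z) + D (μ y x) (α z) - D (α y) (μ x z) = 0 := by
  intro x y z
  simp only [delta_two_delta_one_eq_homAssociator_sum μ α f hf D hD,
    homAssociator_add_homAssociator_swap_eq_zero μ α hleft, map_zero, sub_zero, add_zero]

/-- For a Hom-alternative algebra (A, μ, α) and a linear map f
commuting with α, the composite δ² ∘ δ¹ vanishes: δ²(δ¹f) = 0. -/
theorem delta_two_comp_delta_one_eq_zero
    {K : Type*} [Field K] [CharZero K] {A : Type*} [AddCommGroup A] [Module K A]
    (μ : A →ₗ[K] A →ₗ[K] A) (α : A →ₗ[K] A)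
    (hleft : ∀ x y : A, μ (α x) (μ x y) = μ (μ x x) (α y))
    (hright : ∀ x y : A, μ (α x) (μ y y) = μ (μ x y) (α y))
    (f : A →ₗ[K] A) (hf : ∀ x : A, f (α x) = α (f x))
    (D : A → A → A)
    (hD : ∀ x y : A, D x y = μ (f x) y + μ x (f y) - f (μ x y)) :
    ∀ x y z : A,
      μ (D x y) (α z) - μ (α x) (D y z) + D (μ x y) (α z) - D (α x) (μ y z)
        + μ (D y x) (α z) - μ (α y) (D x z) + D (μ y x) (α z) - D (α y) (μ x z) = 0 :=
  delta_two_comp_delta_one_eq_zero_general μ α hleft f hf D hD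
end

section
/- Let K be a field of characteristic zero and let A = K⁴ with basis {e₀, e₁, e₂, e₃} carry the skew-symmetric bilinear bracket determined by [e₀,e₁]=−e₁, [e₀,e₂]=−e₂, [e₀,e₃]=e₃, [e₁,e₂]=2e₃, all other brackets of basis vectors (up to skew-symmetry) being zero. Then (A, [·,·]) is a Malcev algebra, and for every t ∈ K the linear map α_t defined by α_t(e₀)=e₀+t(e₂+e₃), α_t(e₁)=e₁+t(e₁+e₂+e₃)+t²e₃, α_t(e₂)=(1+t)e₂, α_t(e₃)=(1+t)²e₃ is an algebra endomorphism of (A, [·,·]); consequently (A, α_t∘[·,·], α_t) is a Hom-Malcev algebra deforming (A, [·,·], id). -/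
/-!
Yau's twisting principle: if `α` is multiplicative for a Malcev bracket `[·,·]`, the
Hom-Jacobiator of `α ∘ [·,·]` is `α² ∘ J`, and `α` commutes with `J`; hence both sides of the
Hom-Malcev identity for `(α ∘ [·,·], α)` are `α³` applied to the two sides of the Malcev identity.
For the example, the structure constants (together with `[eᵢ, eᵢ] = 0`, which follows from
skew-symmetry in characteristic zero) pin `[·,·]` and `α_t` down to explicit coordinate
formulas, for which the Malcev identity and multiplicativity are polynomial identities.
-/

section HomMalcev

variable {M : Type*} [Add M]

def jacobiator (br : M → M → M) (x y z : M) : M :=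
  br (br x y) z + br (br y z) x + br (br z x) y

def homJacobiator (br : M → M → M) (α : M → M) (x y z : M) : M :=
  br (br x y) (α z) + br (br y z) (α x) + br (br z x) (α y)

def IsMalcev (br : M → M → M) : Prop :=
  ∀ x y z, jacobiator br x y (br x z) = br (jacobiator br x y z) x

def IsHomMalcev (br : M → M → M) (α : M → M) : Prop :=
  ∀ x y z, homJacobiator br α (α x) (α y) (br x z) = br (homJacobiator br α x y z) (α (α x))

variable {F : Type*} [FunLike F M M] [AddHomClass F M M] {br : M → M → M} {α : F}

theorem jacobiator_map (hα : ∀ x y, α (br x y) = br (α x) (α y)) (x y z : M) :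
    jacobiator br (α x) (α y) (α z) = α (jacobiator br x y z) := by
  simp only [jacobiator, map_add, hα]

theorem homJacobiator_twist (hα : ∀ x y, α (br x y) = br (α x) (α y)) (x y z : M) :
    homJacobiator (fun x y => α (br x y)) α x y z = α (α (jacobiator br x y z)) := by
  simp only [homJacobiator, jacobiator, map_add, hα]

theorem IsMalcev.isHomMalcev_twist (hbr : IsMalcev br) (hα : ∀ x y, α (br x y) = br (α x) (α y)) :
    IsHomMalcev (fun x y => α (br x y)) α := by
  intro x y z
  simp only [homJacobiator_twist hα, ← hα, jacobiator_map hα]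
  rw [hbr]

end HomMalcev

namespace MalcevExample

variable {K : Type*} [CommRing K]

def bracket (x y : Fin 4 → K) : Fin 4 → K :=
  ![0, x 1 * y 0 - x 0 * y 1, x 2 * y 0 - x 0 * y 2,
    x 0 * y 3 - x 3 * y 0 + 2 * (x 1 * y 2 - x 2 * y 1)]

def deformation (t : K) (x : Fin 4 → K) : Fin 4 → K :=
  ![x 0, (1 + t) * x 1, t * (x 0 + x 1) + (1 + t) * x 2,
    t * x 0 + t * (1 + t) * x 1 + (1 + t) ^ 2 * x 3]

theorem isMalcev_bracket : IsMalcev (bracket (K := K)) := by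
  intro x y z
  ext i
  fin_cases i <;> simp [jacobiator, bracket] <;> ring

theorem deformation_bracket (t : K) (x y : Fin 4 → K) :
    deformation t (bracket x y) = bracket (deformation t x) (deformation t y) := by
  ext i
  fin_cases i <;> simp [deformation, bracket] <;> ring

theorem eq_deformation_of_basis (t : K) (α : (Fin 4 → K) →ₗ[K] (Fin 4 → K))
    (h0 : α (Pi.single 0 1) = Pi.single 0 1 + t • (Pi.single 2 1 + Pi.single 3 1))
    (h1 : α (Pi.single 1 1) =
      Pi.single 1 1 + t • (Pi.single 1 1 + Pi.single 2 1 + Pi.single 3 1) + (t * t) • Pi.single 3 1)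
    (h2 : α (Pi.single 2 1) = (1 + t) • Pi.single 2 1)
    (h3 : α (Pi.single 3 1) = ((1 + t) * (1 + t)) • Pi.single 3 1) (x : Fin 4 → K) :
    α x = deformation t x := by
  conv_lhs => rw [pi_eq_sum_univ' x]
  simp only [Fin.sum_univ_four, map_add, map_smul, h0, h1, h2, h3]
  ext i
  fin_cases i <;> simp [deformation] <;> ring

theorem eq_bracket_of_basis [IsAddTorsionFree K]
    (br : (Fin 4 → K) →ₗ[K] (Fin 4 → K) →ₗ[K] (Fin 4 → K))
    (hskew : ∀ x y, br x y = - br y x)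
    (h01 : br (Pi.single 0 1) (Pi.single 1 1) = - Pi.single 1 1)
    (h02 : br (Pi.single 0 1) (Pi.single 2 1) = - Pi.single 2 1)
    (h03 : br (Pi.single 0 1) (Pi.single 3 1) = Pi.single 3 1)
    (h12 : br (Pi.single 1 1) (Pi.single 2 1) = (2 : K) • Pi.single 3 1)
    (h13 : br (Pi.single 1 1) (Pi.single 3 1) = 0)
    (h23 : br (Pi.single 2 1) (Pi.single 3 1) = 0) (x y : Fin 4 → K) :
    br x y = bracket x y := by
  have hdiag : ∀ i, br (Pi.single i 1) (Pi.single i 1) = 0 := fun i => self_eq_neg.mp (hskew _ _)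
  conv_lhs => rw [pi_eq_sum_univ' x, pi_eq_sum_univ' y]
  simp only [Fin.sum_univ_four, map_add, map_smul, LinearMap.add_apply, LinearMap.smul_apply,
    hdiag, h01, h02, h03, h12, h13, h23, hskew (Pi.single 1 1) (Pi.single 0 1),
    hskew (Pi.single 2 1) (Pi.single 0 1), hskew (Pi.single 3 1) (Pi.single 0 1),
    hskew (Pi.single 2 1) (Pi.single 1 1), hskew (Pi.single 3 1) (Pi.single 1 1),
    hskew (Pi.single 3 1) (Pi.single 2 1)]
  ext i
  fin_cases i <;> simp [bracket] <;> ring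

end MalcevExample

/-- The 4-dimensional bracket with [e₀,e₁]=-e₁, [e₀,e₂]=-e₂,
[e₀,e₃]=e₃, [e₁,e₂]=2e₃ is a Malcev algebra, the maps α_t are algebra
endomorphisms, and (A, α_t∘[·,·], α_t) is a Hom-Malcev algebra. -/
theorem malcev_example_deformation
    {K : Type*} [Field K] [CharZero K]
    (br : (Fin 4 → K) →ₗ[K] (Fin 4 → K) →ₗ[K] (Fin 4 → K))
    (e : Fin 4 → (Fin 4 → K)) (he : ∀ i, e i = Pi.single i 1)
    (hskew : ∀ x y : Fin 4 → K, br x y = - br y x)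
    (h01 : br (e 0) (e 1) = - e 1)
    (h02 : br (e 0) (e 2) = - e 2)
    (h03 : br (e 0) (e 3) = e 3)
    (h12 : br (e 1) (e 2) = (2 : K) • e 3)
    (h13 : br (e 1) (e 3) = 0)
    (h23 : br (e 2) (e 3) = 0)
    (J : (Fin 4 → K) → (Fin 4 → K) → (Fin 4 → K) → (Fin 4 → K))
    (hJ : ∀ x y z, J x y z = br (br x y) z + br (br y z) x + br (br z x) y)
    (t : K) (αt : (Fin 4 → K) →ₗ[K] (Fin 4 → K))
    (hαt0 : αt (e 0) = e 0 + t • (e 2 + e 3))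
    (hαt1 : αt (e 1) = e 1 + t • (e 1 + e 2 + e 3) + (t * t) • e 3)
    (hαt2 : αt (e 2) = (1 + t) • e 2)
    (hαt3 : αt (e 3) = ((1 + t) * (1 + t)) • e 3)
    (nb : (Fin 4 → K) → (Fin 4 → K) → (Fin 4 → K))
    (hnb : ∀ x y, nb x y = αt (br x y))
    (NJ : (Fin 4 → K) → (Fin 4 → K) → (Fin 4 → K) → (Fin 4 → K))
    (hNJ : ∀ x y z,
      NJ x y z = nb (nb x y) (αt z) + nb (nb y z) (αt x) + nb (nb z x) (αt y)) :
    (∀ x y z, J x y (br x z) = br (J x y z) x) ∧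
    (∀ x y, αt (br x y) = br (αt x) (αt y)) ∧
    (∀ x y z, NJ (αt x) (αt y) (nb x z) = nb (NJ x y z) (αt (αt x))) := by
  obtain rfl : e = fun i => Pi.single i 1 := funext he
  have hbr : ∀ x y, br x y = MalcevExample.bracket x y :=
    MalcevExample.eq_bracket_of_basis br hskew h01 h02 h03 h12 h13 h23
  have hα : ∀ x, αt x = MalcevExample.deformation t x :=
    MalcevExample.eq_deformation_of_basis t αt hαt0 hαt1 hαt2 hαt3
  have hmalcev : IsMalcev fun x y => br x y := by
    simpa only [hbr] using MalcevExample.isMalcev_bracket (K := K)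
  have hendo : ∀ x y, αt (br x y) = br (αt x) (αt y) := by
    simp only [hbr, hα, MalcevExample.deformation_bracket, implies_true]
  obtain rfl : J = jacobiator fun x y => br x y := by funext x y z; exact hJ x y z
  obtain rfl : NJ = homJacobiator nb αt := by funext x y z; exact hNJ x y z
  obtain rfl : nb = fun x y => αt (br x y) := by funext x y; exact hnb x y
  exact ⟨hmalcev, hendo, hmalcev.isHomMalcev_twist hendo⟩
end
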